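/- arXiv:1712.10247 — 8 statements merged into one kernel-verified Lean document; each statement's English description precedes it below -/
import Mathlib

section
/- For σ ≥ -1/2, β > 0 and λ ≥ 0, the sum over k ∈ ℕ (k ≥ 1) of the positive parts (λ - (k+σ)√β)_+ is at most λ²/(2√β). -/
theorem stmt_0 (σ β lam : ℝ) (hσ : σ ≥ -1/2) (hβ : 0 < β) (hlam : 0 ≤ lam) :
    ∑' k : ℕ, max (lam - ((k : ℝ) + 1 + σ) * Real.sqrt β) 0 ≤ lam ^ 2 / (2 * Real.sqrt β) := by
  set s := Real.sqrt β with hs_def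
  have hs : 0 < s := Real.sqrt_pos.mpr hβ
  set g : ℕ → ℝ := fun k => (max (lam - (k : ℝ) * s) 0) ^ 2 / (2 * s) with hg
  have hgnn : ∀ k, 0 ≤ g k := fun k => div_nonneg (by positivity) (by linarith)
  have key : ∀ k : ℕ, max (lam - ((k : ℝ) + 1 + σ) * s) 0 ≤ g k - g (k + 1) := by
    intro k
    have h1 : max (lam - ((k : ℝ) + 1 + σ) * s) 0 ≤ max (lam - ((k : ℝ) + 1/2) * s) 0 := by
      apply max_le_max _ le_rfl
      nlinarith
    refine h1.trans ?_
    simp only [hg]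
    push_cast
    rw [div_sub_div_same, le_div_iff₀ (by linarith)]
    rcases le_total (lam - ((k : ℝ) + 1) * s) 0 with h2 | h2
    · rcases le_total (lam - (k : ℝ) * s) 0 with h3 | h3
      · rw [max_eq_right h3, max_eq_right h2, max_eq_right (by nlinarith)]
        nlinarith
      · rw [max_eq_left h3, max_eq_right h2]
        rcases le_total (lam - ((k : ℝ) + 1/2) * s) 0 with h4 | h4
        · rw [max_eq_right h4]; nlinarith
        · rw [max_eq_left h4]; nlinarith
    · rw [max_eq_left (by nlinarith), max_eq_left h2, max_eq_left (by nlinarith)]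
      nlinarith
  apply Real.tsum_le_of_sum_range_le (fun k => le_max_right _ _)
  intro n
  calc ∑ i ∈ Finset.range n, max (lam - ((i : ℝ) + 1 + σ) * s) 0
      ≤ ∑ i ∈ Finset.range n, (g i - g (i + 1)) :=
        Finset.sum_le_sum (fun i _ => key i)
    _ = g 0 - g n := Finset.sum_range_sub' g n
    _ ≤ g 0 := by linarith [hgnn n]
    _ = lam ^ 2 / (2 * s) := by
        simp [hg, max_eq_left hlam]
end

section
/- For all σ ≥ -1/2, β > 0 and λ ≥ 0, ∑_{k≥1} (λ - (k+σ)√β)_+ ≤ λ²/(2√β) - (1+2σ)λ/2 + (1+2σ)²√β/8. -/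
/-!
Substituting `a = λ/√β - σ - 1/2` turns the `k`-th term into `√β · (a - k - 1/2)₊` (indexing from
`k = 0`) and the right-hand side into `√β · a²/2`. The terms are positive exactly for `k < n := ⌈a - 1/2⌉₊`,
and `∑_{k<n} (a - k - 1/2) = n a - n²/2 = a²/2 - (a - n)²/2`.
-/

open Finset

lemma sum_range_sub_sub_half (a : ℝ) (n : ℕ) :
    ∑ k ∈ range n, (a - k - 1/2) = n * a - n ^ 2 / 2 := by
  induction n with
  | zero => simp
  | succ m ih =>
    rw [sum_range_succ, ih]
    push_cast
    ring

lemma tsum_max_sub_sub_half_le (a : ℝ) : ∑' k : ℕ, max (a - k - 1/2) 0 ≤ a ^ 2 / 2 := by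
  set n := ⌈a - 1/2⌉₊
  have h_vanish : ∀ k ∉ range n, max (a - k - 1/2) 0 = 0 := by
    intro k hk
    rw [mem_range, not_lt, Nat.ceil_le] at hk
    exact max_eq_right (by linarith)
  have h_pos : ∀ k ∈ range n, max (a - k - 1/2) 0 = a - k - 1/2 := by
    intro k hk
    have := Nat.lt_ceil.mp (mem_range.mp hk)
    exact max_eq_left (by linarith)
  rw [tsum_eq_sum h_vanish, sum_congr rfl h_pos, sum_range_sub_sub_half]
  nlinarith [sq_nonneg (a - n)]

theorem stmt_2_general (σ β lam : ℝ) (hβ : 0 < β) :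
    ∑' k : ℕ, max (lam - ((k : ℝ) + 1 + σ) * Real.sqrt β) 0
      ≤ lam ^ 2 / (2 * Real.sqrt β) - (1 + 2 * σ) * lam / 2 + (1 + 2 * σ) ^ 2 * Real.sqrt β / 8 := by
  set s := Real.sqrt β
  have hs : 0 < s := Real.sqrt_pos.mpr hβ
  set a := lam / s - σ - 1/2
  have h_term (k : ℕ) : max (lam - ((k : ℝ) + 1 + σ) * s) 0 = s * max (a - k - 1/2) 0 := by
    rw [mul_max_of_nonneg _ _ hs.le, mul_zero]
    congr 1
    simp only [a]
    field_simp
    ring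
  calc ∑' k : ℕ, max (lam - ((k : ℝ) + 1 + σ) * s) 0
      = s * ∑' k : ℕ, max (a - k - 1/2) 0 := by rw [← tsum_mul_left]; exact tsum_congr h_term
    _ ≤ s * (a ^ 2 / 2) := mul_le_mul_of_nonneg_left (tsum_max_sub_sub_half_le a) hs.le
    _ = lam ^ 2 / (2 * s) - (1 + 2 * σ) * lam / 2 + (1 + 2 * σ) ^ 2 * s / 8 := by
      simp only [a]
      field_simp
      ring

theorem stmt_2 (σ β lam : ℝ) (hσ : σ ≥ -1/2) (hβ : 0 < β) (hlam : 0 ≤ lam) :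
    ∑' k : ℕ, max (lam - ((k : ℝ) + 1 + σ) * Real.sqrt β) 0
      ≤ lam ^ 2 / (2 * Real.sqrt β) - (1 + 2 * σ) * lam / 2 + (1 + 2 * σ) ^ 2 * Real.sqrt β / 8 :=
  stmt_2_general σ β lam hβ
end

section
/- For all β > 0 and λ ≥ 0, one has ∑_{k≥1} (λ - (k-1/2)√β)_+² ≤ λ³/(3√β) - (√β/12)λ + β/(36√3). -/
/-!
Write `λ = t √β` and let `n` be the integer nearest to `t`. Exactly the first `n` terms of the
series are nonzero, and their sum is the cubic `β (n t² - n² t + n³/3 - n/12)`, which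
exceeds `β (t³/3 - t/12)` by `β (u/12 - u³/3)` with `u = t - n ∈ [-1/2, 1/2]`.
On that interval `u/12 - u³/3` is at most its critical value `1/(36√3)`, attained at `u = 1/(2√3)`.
-/

open Finset

lemma cubic_le_of_neg_half_le {u : ℝ} (hu : -1 / 2 ≤ u) :
    u / 12 - u ^ 3 / 3 ≤ 1 / (36 * √3) := by
  have h3 : √3 ^ 2 = 3 := Real.sq_sqrt (by norm_num)
  have h3_pos : 0 < √3 := by positivity
  have h3_le : √3 ≤ 2 := by nlinarith
  have hgap : 1 / (36 * √3) - (u / 12 - u ^ 3 / 3)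
      = (√3 * u + 1) * (2 * √3 * u - 1) ^ 2 / (36 * √3) := by
    field_simp
    linear_combination -144 * √3 * u ^ 3 * h3
  have hfactor : 0 ≤ (√3 * u + 1) * (2 * √3 * u - 1) ^ 2 :=
    mul_nonneg (by nlinarith) (sq_nonneg _)
  rw [← sub_nonneg, hgap]
  exact div_nonneg hfactor (by positivity)

lemma sum_range_sq_sub_half_mul {K : Type*} [Field K] [CharZero K] (x s : K) (n : ℕ) :
    ∑ k ∈ range n, (x - ((k : K) + 1 - 1 / 2) * s) ^ 2
      = n * x ^ 2 - (n : K) ^ 2 * x * s + s ^ 2 * ((n : K) ^ 3 / 3 - (n : K) / 12) := by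
  induction n with
  | zero => simp
  | succ m ih =>
    rw [sum_range_succ, ih]
    push_cast
    ring

lemma tsum_max_sub_half_mul_sq {x s : ℝ} {n : ℕ} (hs : 0 ≤ s)
    (hlow : ((n : ℝ) - 1 / 2) * s ≤ x) (hhigh : x ≤ ((n : ℝ) + 1 / 2) * s) :
    ∑' k : ℕ, (max (x - ((k : ℝ) + 1 - 1 / 2) * s) 0) ^ 2
      = ∑ k ∈ range n, (x - ((k : ℝ) + 1 - 1 / 2) * s) ^ 2 := by
  have htail : ∀ k ∉ range n, (max (x - ((k : ℝ) + 1 - 1 / 2) * s) 0) ^ 2 = 0 := by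
    intro k hk
    have hnk : (n : ℝ) ≤ k := by simpa using hk
    rw [max_eq_right (by nlinarith)]
    norm_num
  rw [tsum_eq_sum htail]
  refine sum_congr rfl fun k hk ↦ ?_
  have hkn : (k : ℝ) + 1 ≤ n := by exact_mod_cast mem_range.1 hk
  rw [max_eq_left (by nlinarith)]

theorem stmt_3 (β lam : ℝ) (hβ : 0 < β) (hlam : 0 ≤ lam) :
    ∑' k : ℕ, (max (lam - ((k : ℝ) + 1 - 1/2) * Real.sqrt β) 0) ^ 2
      ≤ lam ^ 3 / (3 * Real.sqrt β) - (Real.sqrt β / 12) * lam + β / (36 * Real.sqrt 3) := by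
  set s := √β
  have hs : 0 < s := Real.sqrt_pos.2 hβ
  have hβs : β = s ^ 2 := (Real.sq_sqrt hβ.le).symm
  set t := lam / s
  have hlam_eq : lam = t * s := (div_mul_cancel₀ lam hs.ne').symm
  set n := ⌊t + 1 / 2⌋₊
  have hn_le : (n : ℝ) ≤ t + 1 / 2 := Nat.floor_le (by positivity)
  have hn_gt : t + 1 / 2 < n + 1 := Nat.lt_floor_add_one _
  rw [tsum_max_sub_half_mul_sq (n := n) hs.le (by nlinarith) (by nlinarith),
    sum_range_sq_sub_half_mul]
  have hcubic := cubic_le_of_neg_half_le (u := t - n) (by linarith)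
  calc (n : ℝ) * lam ^ 2 - (n : ℝ) ^ 2 * lam * s + s ^ 2 * ((n : ℝ) ^ 3 / 3 - (n : ℝ) / 12)
      = s ^ 2 * (t ^ 3 / 3 - t / 12) + s ^ 2 * ((t - n) / 12 - (t - n) ^ 3 / 3) := by
        rw [hlam_eq]; ring
    _ ≤ s ^ 2 * (t ^ 3 / 3 - t / 12) + s ^ 2 * (1 / (36 * √3)) := by
        gcongr
    _ = lam ^ 3 / (3 * s) - s / 12 * lam + β / (36 * √3) := by
        rw [hlam_eq, hβs]
        field_simp
end

section
/- There exist positive constants c₁, c₂, b₀ (one may take c₁ = 1, c₂ = 2/3, b₀ = 1/12) such that for all β > 0, λ ≥ 0, and b ∈ [0,b₀]: ∑_{k≥1} (λ - (k-1/2)√β)_+² ≤ λ³/(3√β) - c₁ b √β λ + c₂ b^{3/2} β. -/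
lemma aux_sum (lam s : ℝ) (n : ℕ) :
    ∑ k ∈ Finset.range n, (lam - ((k:ℝ) + 1/2) * s) ^ 2
      = n * lam ^ 2 - s * lam * (n:ℝ) ^ 2 + s ^ 2 * ((n:ℝ) ^ 3 / 3 - (n:ℝ) / 12) := by
  induction n with
  | zero => simp
  | succ m ih =>
    rw [Finset.sum_range_succ, ih]
    push_cast
    ring

lemma aux_key (n : ℕ) (r t : ℝ) (hr : 0 ≤ r) (ht : 0 ≤ t) (ht2 : t ^ 2 ≤ 1/12)
    (h1 : (n:ℝ) ≤ r + 1/2) (h2 : r ≤ (n:ℝ) + 1/2) :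
    (n:ℝ) * r ^ 2 - (n:ℝ) ^ 2 * r + (n:ℝ) ^ 3 / 3 - (n:ℝ) / 12
      ≤ r ^ 3 / 3 - t ^ 2 * r + 2/3 * t ^ 3 := by
  rcases Nat.eq_zero_or_pos n with hn | hn
  · subst hn
    simp only [Nat.cast_zero]
    nlinarith [mul_nonneg (sq_nonneg (r - t)) (by linarith : (0:ℝ) ≤ r + 2 * t)]
  · have hn1 : (1:ℝ) ≤ (n:ℝ) := by exact_mod_cast hn
    rcases le_or_gt (n:ℝ) r with hu | hu
    · -- u = r - n ≥ 0
      nlinarith [mul_nonneg (sq_nonneg ((r - n) - t)) (by linarith : (0:ℝ) ≤ (r - n) + 2 * t),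
        mul_nonneg (by linarith : (0:ℝ) ≤ 1/12 - t^2) (by positivity : (0:ℝ) ≤ (n:ℝ))]
    · -- u = r - n ≤ 0, v = n - r ∈ [0,1/2]
      nlinarith [mul_nonneg (by linarith : (0:ℝ) ≤ 1/12 - t^2) (by linarith : (0:ℝ) ≤ (n:ℝ) - 1),
        mul_nonneg (by linarith : (0:ℝ) ≤ 1/12 - t^2) (by linarith : (0:ℝ) ≤ 1 + (r - n)),
        mul_nonneg (by linarith : (0:ℝ) ≤ (n:ℝ) - r)
          (by nlinarith : (0:ℝ) ≤ 1/4 - (r - n)^2),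
        pow_nonneg ht 3]

theorem stmt_4 :
    ∃ c₁ c₂ b₀ : ℝ, 0 < c₁ ∧ 0 < c₂ ∧ 0 < b₀ ∧
      ∀ β lam b : ℝ, 0 < β → 0 ≤ lam → b ∈ Set.Icc 0 b₀ →
        ∑' k : ℕ, (max (lam - ((k : ℝ) + 1 - 1/2) * Real.sqrt β) 0) ^ 2
          ≤ lam ^ 3 / (3 * Real.sqrt β) - c₁ * b * Real.sqrt β * lam + c₂ * b ^ ((3:ℝ)/2) * β := by
  refine ⟨1, 2/3, 1/12, one_pos, by norm_num, by norm_num, ?_⟩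
  intro β lam b hβ hlam hb
  obtain ⟨hb0, hb1⟩ := hb
  set s := Real.sqrt β with hs_def
  have hs : 0 < s := Real.sqrt_pos.mpr hβ
  have hsβ : s ^ 2 = β := Real.sq_sqrt hβ.le
  set t := Real.sqrt b with ht_def
  have ht : 0 ≤ t := Real.sqrt_nonneg b
  have ht2 : t ^ 2 = b := Real.sq_sqrt hb0
  have ht12 : t ^ 2 ≤ 1/12 := by rw [ht2]; exact hb1
  have h32 : b ^ ((3:ℝ)/2) = t ^ 3 := by
    rw [ht_def, Real.sqrt_eq_rpow, ← Real.rpow_natCast (b ^ ((1:ℝ)/2)) 3,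
      ← Real.rpow_mul hb0]
    norm_num
  set r := lam / s with hr_def
  have hr : 0 ≤ r := div_nonneg hlam hs.le
  set n := ⌊r + 1/2⌋₊ with hn_def
  have h1 : (n:ℝ) ≤ r + 1/2 := Nat.floor_le (by linarith)
  have h2 : r + 1/2 < (n:ℝ) + 1 := Nat.lt_floor_add_one _
  have hlam_eq : lam = r * s := (div_mul_cancel₀ lam hs.ne').symm
  have htsum : (∑' k : ℕ, (max (lam - ((k : ℝ) + 1 - 1/2) * s) 0) ^ 2)
      = ∑ k ∈ Finset.range n, (lam - ((k:ℝ) + 1/2) * s) ^ 2 := by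
    rw [tsum_eq_sum (s := Finset.range n) ?_]
    · refine Finset.sum_congr rfl fun k hk => ?_
      have hk' : (k:ℝ) + 1 ≤ (n:ℝ) := by
        exact_mod_cast Nat.succ_le_of_lt (Finset.mem_range.mp hk)
      have : ((k:ℝ) + 1/2) * s ≤ lam := by
        rw [hlam_eq]
        have : (k:ℝ) + 1/2 ≤ r := by linarith
        nlinarith
      rw [max_eq_left (by linarith)]
      ring_nf
    · intro k hk
      have hk' : (n:ℝ) ≤ (k:ℝ) := by exact_mod_cast Nat.le_of_not_lt (fun h => hk (Finset.mem_range.mpr h))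
      have : lam ≤ ((k:ℝ) + 1 - 1/2) * s := by
        rw [hlam_eq]
        have : r ≤ (k:ℝ) + 1/2 := by linarith
        nlinarith
      rw [max_eq_right (by linarith)]
      ring
  rw [htsum]
  have hsum := aux_sum lam s n
  have hkey := aux_key n r t hr ht ht12 (by linarith) (by linarith)
  have hkey2 := mul_le_mul_of_nonneg_left hkey (sq_nonneg s)
  rw [hsum, h32, hlam_eq, ← hsβ]
  have hdiv : (r * s) ^ 3 / (3 * s) = r ^ 3 * s ^ 2 / 3 := by
    field_simp
  rw [hdiv, ht2] at *
  nlinarith [hkey2]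
end

section
/- Fix σ = τ ≥ -1/2 and t > 0, and define H(β) = exp(-t·σ(√β + 1/√β)) / ((e^{t√β}-1)(e^{t/√β}-1)) for β > 0. Then β = 1 is a global maximizer of H on (0,∞). -/
/-- Superadditivity of `s ↦ cosh (√s)`: termwise from the power series. -/
lemma cosh_sqrt_superadd (B C : ℝ) :
    Real.cosh B + Real.cosh C ≤ Real.cosh (Real.sqrt (B ^ 2 + C ^ 2)) + 1 := by
  set A := Real.sqrt (B ^ 2 + C ^ 2) with hA
  have hA2 : A ^ 2 = B ^ 2 + C ^ 2 := Real.sq_sqrt (by positivity)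
  have h1 : HasSum (fun n : ℕ => A ^ (2 * n) / ((2 * n).factorial : ℝ)) (Real.cosh A) := Real.hasSum_cosh A
  have h2 : HasSum (fun n : ℕ => B ^ (2 * n) / ((2 * n).factorial : ℝ)) (Real.cosh B) := Real.hasSum_cosh B
  have h3 : HasSum (fun n : ℕ => C ^ (2 * n) / ((2 * n).factorial : ℝ)) (Real.cosh C) := Real.hasSum_cosh C
  have hone : HasSum (fun n : ℕ => if n = 0 then (1 : ℝ) else 0) 1 := hasSum_ite_eq 0 1
  refine hasSum_le (fun n => ?_) (h2.add h3) (h1.add hone)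
  rcases n with _ | m
  · simp
  · have key : B ^ (2 * (m + 1)) + C ^ (2 * (m + 1)) ≤ A ^ (2 * (m + 1)) := by
      calc B ^ (2 * (m + 1)) + C ^ (2 * (m + 1))
          = (B ^ 2) ^ (m + 1) + (C ^ 2) ^ (m + 1) := by rw [← pow_mul, ← pow_mul]
        _ ≤ (B ^ 2 + C ^ 2) ^ (m + 1) :=
            pow_add_pow_le (sq_nonneg B) (sq_nonneg C) (Nat.succ_ne_zero m)
        _ = A ^ (2 * (m + 1)) := by rw [← hA2, ← pow_mul]
    simp only [Nat.succ_ne_zero, if_false, add_zero, ← add_div]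
    gcongr

/-- Multiplicative midpoint convexity of `sinh`. -/
lemma sinh_sq_le_sinh_mul_sinh {x y : ℝ} (hx : 0 ≤ x) (hy : 0 ≤ y) :
    Real.sinh (Real.sqrt (x * y)) ^ 2 ≤ Real.sinh x * Real.sinh y := by
  set c := Real.sqrt (x * y) with hc
  have hc2 : c ^ 2 = x * y := Real.sq_sqrt (mul_nonneg hx hy)
  have h1 : Real.sinh x * Real.sinh y = (Real.cosh (x + y) - Real.cosh (x - y)) / 2 := by
    rw [Real.cosh_add, Real.cosh_sub]; ring
  have h2 : Real.sinh c ^ 2 = (Real.cosh (2 * c) - 1) / 2 := by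
    have := Real.cosh_two_mul c
    have h := Real.cosh_sq c
    linarith
  have h3 : Real.cosh (2 * c) + Real.cosh (x - y) ≤ Real.cosh (x + y) + 1 := by
    have hs : Real.sqrt ((2 * c) ^ 2 + (x - y) ^ 2) = x + y := by
      have : (2 * c) ^ 2 + (x - y) ^ 2 = (x + y) ^ 2 := by
        have : (2 * c) ^ 2 = 4 * (x * y) := by rw [mul_pow, hc2]; ring
        rw [this]; ring
      rw [this, Real.sqrt_sq (by linarith)]
    have := cosh_sqrt_superadd (2 * c) (x - y)
    rwa [hs] at this
  linarith

lemma exp_sub_one_eq (x : ℝ) : Real.exp x - 1 = 2 * Real.exp (x / 2) * Real.sinh (x / 2) := by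
  rw [Real.sinh_eq]
  have h1 : Real.exp (x / 2) * Real.exp (x / 2) = Real.exp x := by
    rw [← Real.exp_add]; ring_nf
  have h2 : Real.exp (x / 2) * Real.exp (-(x / 2)) = 1 := by
    rw [← Real.exp_add]; simp
  nlinarith [h1, h2]

theorem stmt_7 (σ t : ℝ) (hσ : σ ≥ -1/2) (ht : 0 < t)
    (H : ℝ → ℝ)
    (hH : ∀ β, H β = Real.exp (-t * σ * (Real.sqrt β + 1 / Real.sqrt β)) /
      ((Real.exp (t * Real.sqrt β) - 1) * (Real.exp (t / Real.sqrt β) - 1))) :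
    ∀ β > 0, H β ≤ H 1 := by
  intro β hβ
  rw [hH, hH]
  set a := Real.sqrt β with ha'
  have ha : 0 < a := Real.sqrt_pos.mpr hβ
  simp only [Real.sqrt_one, mul_one, div_one]
  -- positivity of denominators
  have hd1 : 0 < Real.exp (t * a) - 1 := by
    have : (1 : ℝ) < Real.exp (t * a) := Real.one_lt_exp_iff.mpr (by positivity)
    linarith
  have hd2 : 0 < Real.exp (t / a) - 1 := by
    have : (1 : ℝ) < Real.exp (t / a) := Real.one_lt_exp_iff.mpr (by positivity)
    linarith
  have hd3 : 0 < Real.exp t - 1 := by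
    have : (1 : ℝ) < Real.exp t := Real.one_lt_exp_iff.mpr ht
    linarith
  rw [div_le_div_iff₀ (by positivity) (by positivity)]
  -- abbreviations
  have hs2 : 2 ≤ a + 1 / a := by
    rw [← sub_nonneg]
    have : a + 1 / a - 2 = (a - 1) ^ 2 / a := by field_simp; ring
    rw [this]; positivity
  -- factor each exp x - 1
  rw [exp_sub_one_eq (t * a), exp_sub_one_eq (t / a), exp_sub_one_eq t]
  -- key exponential inequality
  have hexp : Real.exp (-t * σ * (a + 1 / a) + t) ≤
      Real.exp (-t * σ * (1 + 1) + t * (a + 1 / a) / 2) := by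
    apply Real.exp_le_exp.mpr
    nlinarith [mul_nonneg (mul_nonneg ht.le (by linarith : (0:ℝ) ≤ σ + 1/2))
      (by linarith : (0:ℝ) ≤ a + 1/a - 2)]
  -- key sinh inequality
  have hsinh : Real.sinh (t / 2) ^ 2 ≤ Real.sinh (t * a / 2) * Real.sinh (t / a / 2) := by
    have hxy : Real.sqrt ((t * a / 2) * (t / a / 2)) = t / 2 := by
      have : (t * a / 2) * (t / a / 2) = (t / 2) ^ 2 := by
        field_simp
      rw [this, Real.sqrt_sq (by positivity)]
    have := sinh_sq_le_sinh_mul_sinh (by positivity : (0:ℝ) ≤ t * a / 2)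
      (by positivity : (0:ℝ) ≤ t / a / 2)
    rwa [hxy] at this
  have hkey : Real.exp (-t * σ * (a + 1 / a) + t) * Real.sinh (t / 2) ^ 2 ≤
      Real.exp (-t * σ * (1 + 1) + t * (a + 1 / a) / 2) *
        (Real.sinh (t * a / 2) * Real.sinh (t / a / 2)) :=
    mul_le_mul hexp hsinh (sq_nonneg _) (Real.exp_pos _).le
  -- now rewrite both sides of the goal into the form of hkey
  have hexpt : Real.exp (t / 2) * Real.exp (t / 2) = Real.exp t := by
    rw [← Real.exp_add]; ring_nf
  have hL : Real.exp (-t * σ * (a + 1 / a)) *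
      (2 * Real.exp (t / 2) * Real.sinh (t / 2) * (2 * Real.exp (t / 2) * Real.sinh (t / 2)))
      = 4 * (Real.exp (-t * σ * (a + 1 / a) + t) * Real.sinh (t / 2) ^ 2) := by
    rw [Real.exp_add]
    linear_combination 4 * Real.exp (-t * σ * (a + 1 / a)) * Real.sinh (t / 2) ^ 2 * hexpt
  have hR : Real.exp (-t * σ * (1 + 1)) *
      (2 * Real.exp (t * a / 2) * Real.sinh (t * a / 2) *
        (2 * Real.exp (t / a / 2) * Real.sinh (t / a / 2)))
      = 4 * (Real.exp (-t * σ * (1 + 1) + t * (a + 1 / a) / 2) *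
        (Real.sinh (t * a / 2) * Real.sinh (t / a / 2))) := by
    rw [Real.exp_add]
    have h : Real.exp (t * a / 2) * Real.exp (t / a / 2) = Real.exp (t * (a + 1 / a) / 2) := by
      rw [← Real.exp_add]; ring_nf
    linear_combination 4 * Real.exp (-t * σ * (1 + 1)) *
      (Real.sinh (t * a / 2) * Real.sinh (t / a / 2)) * h
  rw [hL, hR]
  linarith [hkey]
end

section
/- For σ, τ > -1/2 there exist positive constants c₁, c₂, c₃, b₀ such that for all λ ≥ 0, β > 0 and b ∈ [0,b₀]: N_{σ,τ}(β,λ) ≤ λ²/2 - c₁ b ((1+β)/√β) λ + c₂ b² ((1+β²)/β) + c₃(λ+1), where N_{σ,τ}(β,λ) = #{(k₁,k₂) ∈ ℕ²: (k₁+σ)√β + (k₂+τ)/√β ≤ λ}. -/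
/-!
Count the lattice points column by column: for `r ≥ 1` the column `k₁ = j` holds at most
`t - j r²` points, and summing this arithmetic progression bounds the count by
`(λ - (σ + 1/2) r - τ / r)² / 2`, the area of a slightly shrunk triangle. Since `τ / r ≥ -1/2`,
the shift `(σ + 1/2) r - 1/2` of `λ` is large enough to produce the term `-c₁ b (r + 1/r) λ`,
up to an error `λ + 1`. The case `r < 1` follows by exchanging the roles of `(k₁, σ)` and
`(k₂, τ)`, which replaces `r` by `r⁻¹`. When there is no lattice point at all, the bound is
nonnegative because `(r + 1/r)² ≤ 2 (r² + 1/r²)`; this is where `c₂ = c₁²` comes from.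
-/

open Finset

/-- Here `r` plays the role of `√β`. -/
def latticeTriangle (σ τ r lam : ℝ) : Set (ℕ × ℕ) :=
  {k | ((k.1 : ℝ) + 1 + σ) * r + ((k.2 : ℝ) + 1 + τ) / r ≤ lam}

lemma ncard_le_sum_of_fiber_le {S : Set (ℕ × ℕ)} {g : ℕ → ℝ} {J : ℕ}
    (hS : ∀ k ∈ S, k.1 < J ∧ (k.2 : ℝ) + 1 ≤ g k.1) (hg : ∀ j < J, 0 ≤ g j) :
    (S.ncard : ℝ) ≤ ∑ j ∈ range J, g j := by
  set T : Finset (ℕ × ℕ) := (range J).biUnion fun j => {j} ×ˢ range ⌊g j⌋₊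
  have hST : S ⊆ T := by
    intro k hk
    obtain ⟨hkJ, hkg⟩ := hS k hk
    have hk2 : k.2 + 1 ≤ ⌊g k.1⌋₊ := Nat.le_floor (by push_cast; exact hkg)
    simp only [T, coe_biUnion, coe_range, Set.mem_Iio, Set.mem_iUnion, mem_coe, mem_product,
      mem_singleton, mem_range]
    exact ⟨k.1, hkJ, rfl, by omega⟩
  calc (S.ncard : ℝ) ≤ T.card := by
        exact_mod_cast (Set.ncard_le_ncard hST T.finite_toSet).trans_eq (Set.ncard_coe_finset T)
    _ ≤ ∑ j ∈ range J, (⌊g j⌋₊ : ℝ) := by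
        exact_mod_cast card_biUnion_le.trans_eq (by simp)
    _ ≤ ∑ j ∈ range J, g j :=
        sum_le_sum fun j hj => Nat.floor_le (hg j (mem_range.mp hj))

lemma sum_range_sub_mul_le (t : ℝ) {q : ℝ} (hq : 0 < q) (J : ℕ) :
    ∑ j ∈ range J, (t - j * q) ≤ (t + q / 2) ^ 2 / (2 * q) := by
  have hsum : ∑ j ∈ range J, (t - j * q) = J * t - q * J * (J - 1) / 2 := by
    induction J with
    | zero => simp
    | succ n ih => rw [sum_range_succ, ih]; push_cast; ring
  rw [hsum, le_div_iff₀ (by positivity)]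
  -- the difference of the two sides is `(t + q / 2 - q J)²`
  nlinarith [sq_nonneg (t + q / 2 - q * J)]

lemma ncard_latticeTriangle_le (σ τ lam : ℝ) {r : ℝ} (hr : 0 < r) :
    ((latticeTriangle σ τ r lam).ncard : ℝ) ≤ (lam - (σ + 1 / 2) * r - τ / r) ^ 2 / 2 := by
  set t := lam * r - (1 + σ) * r ^ 2 - τ
  have hr2 : 0 < r ^ 2 := by positivity
  have hmem : ∀ k ∈ latticeTriangle σ τ r lam, (k.2 : ℝ) + 1 ≤ t - k.1 * r ^ 2 := by
    intro k hk
    have := (mul_le_mul_iff_of_pos_right hr).mpr hk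
    rw [add_mul, div_mul_cancel₀ _ hr.ne'] at this
    linarith
  have hfiber : ∀ k ∈ latticeTriangle σ τ r lam,
      k.1 < ⌈t / r ^ 2⌉₊ ∧ (k.2 : ℝ) + 1 ≤ t - k.1 * r ^ 2 := by
    refine fun k hk => ⟨Nat.lt_ceil.mpr ?_, hmem k hk⟩
    rw [lt_div_iff₀ hr2]
    linarith [hmem k hk, (k.2.cast_nonneg : (0 : ℝ) ≤ k.2)]
  have hpos : ∀ j < ⌈t / r ^ 2⌉₊, 0 ≤ t - j * r ^ 2 := by
    intro j hj
    have := (lt_div_iff₀ hr2).mp (Nat.lt_ceil.mp hj)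
    linarith
  calc ((latticeTriangle σ τ r lam).ncard : ℝ)
      ≤ ∑ j ∈ range ⌈t / r ^ 2⌉₊, (t - j * r ^ 2) := ncard_le_sum_of_fiber_le hfiber hpos
    _ ≤ (t + r ^ 2 / 2) ^ 2 / (2 * r ^ 2) := sum_range_sub_mul_le t hr2 _
    _ = (lam - (σ + 1 / 2) * r - τ / r) ^ 2 / 2 := by field_simp; ring

lemma ncard_latticeTriangle_inv (σ τ lam r : ℝ) :
    (latticeTriangle τ σ r⁻¹ lam).ncard = (latticeTriangle σ τ r lam).ncard := by
  have : latticeTriangle τ σ r⁻¹ lam = Prod.swap '' latticeTriangle σ τ r lam := by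
    rw [Set.image_swap_eq_preimage_swap]
    ext k
    simp only [latticeTriangle, Set.mem_preimage, Set.mem_ofPred_eq, Prod.fst_swap,
      Prod.snd_swap, div_inv_eq_mul, ← div_eq_mul_inv, add_comm]
  rw [this, Set.ncard_image_of_injective _ Prod.swap_injective]

lemma sq_one_add_sq_div_le {r : ℝ} (hr : 0 < r) :
    ((1 + r ^ 2) / r) ^ 2 ≤ 2 * ((1 + (r ^ 2) ^ 2) / r ^ 2) := by
  rw [div_pow, mul_div_assoc']
  exact div_le_div_of_nonneg_right (by nlinarith [sq_nonneg (1 - r ^ 2)]) (by positivity)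

/-- The right-hand side of the theorem with `c₁ = ε`, `c₂ = ε²`, `c₃ = 1` and `β = r²`. -/
noncomputable def latticeBound (ε b r lam : ℝ) : ℝ :=
  lam ^ 2 / 2 - ε * b * ((1 + r ^ 2) / r) * lam
    + ε ^ 2 * b ^ 2 * ((1 + (r ^ 2) ^ 2) / r ^ 2) + (lam + 1)

lemma latticeBound_nonneg (ε b : ℝ) {r lam : ℝ} (hr : 0 < r) (hlam : 0 ≤ lam) :
    0 ≤ latticeBound ε b r lam := by
  have hA := mul_le_mul_of_nonneg_left (sq_one_add_sq_div_le hr) (sq_nonneg (ε * b))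
  unfold latticeBound
  nlinarith [sq_nonneg (lam - ε * b * ((1 + r ^ 2) / r))]

lemma latticeBound_inv (ε b r lam : ℝ) : latticeBound ε b r⁻¹ lam = latticeBound ε b r lam := by
  rcases eq_or_ne r 0 with rfl | hr
  · rw [inv_zero]
  · have hA : (1 + r⁻¹ ^ 2) / r⁻¹ = (1 + r ^ 2) / r := by field_simp; ring
    have hB : (1 + (r⁻¹ ^ 2) ^ 2) / r⁻¹ ^ 2 = (1 + (r ^ 2) ^ 2) / r ^ 2 := by field_simp; ring
    rw [latticeBound, hA, hB, latticeBound]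

lemma sq_sub_div_two_le {lam s p : ℝ} (hp : 0 ≤ p) (hps : p - 1 / 2 ≤ s) (hs : s ≤ lam)
    (hpl : p ≤ lam) :
    (lam - s) ^ 2 / 2 ≤ lam ^ 2 / 2 - p / 2 * lam + (lam + 1) := by
  nlinarith [mul_le_mul_of_nonneg_left hpl hp,
    mul_le_mul (sub_le_sub_left hps lam) (sub_le_sub_left hps lam) (sub_nonneg.mpr hs)
      (by linarith)]

lemma ncard_latticeTriangle_le_latticeBound {σ τ r lam ε b : ℝ} (hε : 0 ≤ ε)
    (hεσ : 4 * ε ≤ σ + 1 / 2) (hτ : -1 / 2 ≤ τ) (hr : 1 ≤ r) (hlam : 0 ≤ lam) (hb : b ≤ 1) :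
    ((latticeTriangle σ τ r lam).ncard : ℝ) ≤ latticeBound ε b r lam := by
  have hr0 : 0 < r := one_pos.trans_le hr
  rcases (latticeTriangle σ τ r lam).eq_empty_or_nonempty with hempty | ⟨k, hk⟩
  · rw [hempty, Set.ncard_empty, Nat.cast_zero]
    exact latticeBound_nonneg ε b hr0 hlam
  have hlam_ge : (1 + σ) * r + (1 + τ) / r ≤ lam := by
    refine le_trans (add_le_add (mul_le_mul_of_nonneg_right ?_ hr0.le)
      (div_le_div_of_nonneg_right ?_ hr0.le)) hk <;> linarith [k.1.cast_nonneg (α := ℝ),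
        k.2.cast_nonneg (α := ℝ)]
  have hτr : -1 / 2 ≤ τ / r := by rw [le_div_iff₀ hr0]; nlinarith
  have hτr' : τ / r ≤ (1 + τ) / r := div_le_div_of_nonneg_right (by linarith) hr0.le
  have hA : (1 + r ^ 2) / r ≤ 2 * r := by rw [div_le_iff₀ hr0]; nlinarith
  have hεA : ε * b * ((1 + r ^ 2) / r) ≤ (σ + 1 / 2) * r / 2 := by
    have hεb : ε * b ≤ ε := mul_le_of_le_one_right hε hb
    nlinarith [mul_le_mul hεb hA (by positivity) hε]
  calc ((latticeTriangle σ τ r lam).ncard : ℝ)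
      ≤ (lam - ((σ + 1 / 2) * r + τ / r)) ^ 2 / 2 := by
        rw [← sub_sub]; exact ncard_latticeTriangle_le σ τ lam hr0
    _ ≤ lam ^ 2 / 2 - (σ + 1 / 2) * r / 2 * lam + (lam + 1) :=
        sq_sub_div_two_le (by nlinarith) (by linarith) (by linarith) (by nlinarith)
    _ ≤ latticeBound ε b r lam := by
        have hB : 0 ≤ ε ^ 2 * b ^ 2 * ((1 + (r ^ 2) ^ 2) / r ^ 2) := by positivity
        unfold latticeBound
        nlinarith [mul_le_mul_of_nonneg_right hεA hlam]

theorem stmt_14 (σ τ : ℝ) (hσ : σ > -1/2) (hτ : τ > -1/2) :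
    ∃ c₁ c₂ c₃ b₀ : ℝ, 0 < c₁ ∧ 0 < c₂ ∧ 0 < c₃ ∧ 0 < b₀ ∧
      ∀ lam β b : ℝ, 0 ≤ lam → 0 < β → b ∈ Set.Icc 0 b₀ →
        (Set.ncard {k : ℕ × ℕ |
            ((k.1 : ℝ) + 1 + σ) * Real.sqrt β + ((k.2 : ℝ) + 1 + τ) / Real.sqrt β ≤ lam} : ℝ)
          ≤ lam ^ 2 / 2 - c₁ * b * ((1 + β) / Real.sqrt β) * lam
            + c₂ * b ^ 2 * ((1 + β ^ 2) / β) + c₃ * (lam + 1) := by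
  set ε := min (σ + 1 / 2) (τ + 1 / 2) / 4
  have hεσ : 4 * ε ≤ σ + 1 / 2 := by simp only [ε]; linarith [min_le_left (σ + 1 / 2) (τ + 1 / 2)]
  have hετ : 4 * ε ≤ τ + 1 / 2 := by simp only [ε]; linarith [min_le_right (σ + 1 / 2) (τ + 1 / 2)]
  have hε : 0 < ε := div_pos (lt_min (by linarith) (by linarith)) four_pos
  refine ⟨ε, ε ^ 2, 1, 1, hε, by positivity, one_pos, one_pos, ?_⟩
  rintro lam β b hlam hβ ⟨-, hb⟩
  obtain ⟨r, hr, rfl⟩ : ∃ r, 0 < r ∧ r ^ 2 = β := ⟨√β, Real.sqrt_pos.mpr hβ, Real.sq_sqrt hβ.le⟩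
  rw [Real.sqrt_sq hr.le, one_mul]
  change ((latticeTriangle σ τ r lam).ncard : ℝ) ≤ latticeBound ε b r lam
  rcases le_total 1 r with h1 | h1
  · exact ncard_latticeTriangle_le_latticeBound hε.le hεσ hτ.le h1 hlam hb
  · rw [← ncard_latticeTriangle_inv, ← latticeBound_inv]
    exact ncard_latticeTriangle_le_latticeBound hε.le hετ hσ.le (one_le_inv₀ hr |>.mpr h1) hlam hb
end

section
/- For every complex number z with Re(z) ≥ -log 2, one has |e^z - 1|² ≥ (2/π²)·dist(Im(z), 2πℤ)², where dist(y, 2πℤ) = min over integers m of |y - 2πm|. -/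
/-! For `Re z ≥ -log 2` one has `|e^z - 1|² ≥ 1 - cos (Im z)`. Reducing `Im z` modulo `2π` to
`t ∈ [-π, π]` (the representative `Real.Angle.toReal`), `|t|` bounds the distance to `2πℤ`, and
`1 - cos t ≥ (2/π²) t²` on `[-π, π]`. -/

open Real

theorem Complex.norm_exp_sub_one_sq (z : ℂ) :
    ‖Complex.exp z - 1‖ ^ 2 = rexp z.re ^ 2 - 2 * rexp z.re * Real.cos z.im + 1 := by
  rw [← Complex.normSq_eq_norm_sq, Complex.normSq_apply]
  simp only [Complex.sub_re, Complex.sub_im, Complex.exp_re, Complex.exp_im, Complex.one_re,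
    Complex.one_im]
  linear_combination rexp z.re ^ 2 * Real.sin_sq_add_cos_sq z.im

theorem Complex.one_sub_cos_im_le_norm_exp_sub_one_sq {z : ℂ} (hz : -Real.log 2 ≤ z.re) :
    1 - Real.cos z.im ≤ ‖Complex.exp z - 1‖ ^ 2 := by
  have hhalf : 1 / 2 ≤ rexp z.re := by
    simpa [Real.exp_neg, Real.exp_log] using Real.exp_le_exp.2 hz
  rw [Complex.norm_exp_sub_one_sq]
  -- the difference is `(e^{Re z} - 1)² + (2 e^{Re z} - 1)(1 - cos (Im z))`, and `2 e^{Re z} ≥ 1`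
  nlinarith [sq_nonneg (rexp z.re - 1),
    mul_nonneg (sub_nonneg.2 (Real.cos_le_one z.im)) (by linarith : (0 : ℝ) ≤ 2 * rexp z.re - 1)]

theorem Real.infDist_range_two_pi_mul_int_le (y : ℝ) :
    Metric.infDist y (Set.range fun m : ℤ => 2 * π * m) ≤ |(y : Angle).toReal| := by
  obtain ⟨k, hk⟩ := Angle.angle_eq_iff_two_pi_dvd_sub.1 (Angle.coe_toReal (y : Angle))
  calc Metric.infDist y (Set.range fun m : ℤ => 2 * π * m)
      ≤ dist y (2 * π * ((-k : ℤ) : ℝ)) := Metric.infDist_le_dist_of_mem ⟨-k, rfl⟩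
    _ = |(y : Angle).toReal| := by rw [dist_eq]; push_cast; congr 1; linarith

theorem Real.two_div_pi_sq_mul_infDist_sq_le_one_sub_cos (y : ℝ) :
    2 / π ^ 2 * Metric.infDist y (Set.range fun m : ℤ => 2 * π * m) ^ 2 ≤ 1 - cos y := by
  set t := (y : Angle).toReal
  have hcos : cos t = cos y := by rw [Angle.cos_toReal, Angle.cos_coe]
  calc 2 / π ^ 2 * Metric.infDist y (Set.range fun m : ℤ => 2 * π * m) ^ 2
      ≤ 2 / π ^ 2 * t ^ 2 := by
        rw [← sq_abs t]
        gcongr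
        · exact Metric.infDist_nonneg
        · exact infDist_range_two_pi_mul_int_le y
    _ ≤ 1 - cos y := by
        linarith [hcos ▸ cos_le_one_sub_mul_cos_sq (Angle.abs_toReal_le_pi (y : Angle))]

theorem stmt_17 (z : ℂ) (hz : z.re ≥ -Real.log 2) :
    (2 / Real.pi ^ 2) * (Metric.infDist z.im (Set.range fun m : ℤ => 2 * Real.pi * (m : ℝ))) ^ 2
      ≤ ‖Complex.exp z - 1‖ ^ 2 :=
  (two_div_pi_sq_mul_infDist_sq_le_one_sub_cos z.im).trans
    (Complex.one_sub_cos_im_le_norm_exp_sub_one_sq hz)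
end

section
/- Let μ, ν be coprime positive integers and γ > 0. Then the series ∑_{k ∈ ℕ, ν ∤ k} 1/(k^{1+γ}|sin(π k μ/ν)|) converges, and is bounded above by ∑_{l=1}^{ν-1} (1/|sin(π l μ/ν)|)·(1/l^{1+γ} + ζ(1+γ)/ν^{1+γ}). -/
/-!
The weight `1 / |sin (π k μ / ν)|` depends only on `k mod ν`, so the series splits into the
residue classes `k = l + ν q` with `0 < l < ν`. In each class the term `q = 0` contributes
`1 / l ^ (1 + γ)`, and the remaining terms are dominated by `(ν (q + 1)) ^ (-(1 + γ))`, whose sum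
is `ζ(1 + γ) / ν ^ (1 + γ)`.
-/

open Finset Function Real

theorem periodic_abs_sin_pi_mul_mul_div (μ ν : ℕ) :
    Periodic (fun l : ℕ => |sin (π * l * μ / ν)|) ν := by
  intro l
  rcases Nat.eq_zero_or_pos ν with rfl | hν
  · simp
  have hshift : π * ((l + ν : ℕ) : ℝ) * μ / ν = π * l * μ / ν + μ * π := by
    push_cast; field_simp
  simp only [hshift, sin_add_nat_mul_pi, abs_mul, abs_pow, abs_neg, abs_one, one_pow, one_mul]

section PeriodicWeight

variable {ν : ℕ} {p : ℝ} {w : ℕ → ℝ}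

theorem summable_mul_rpow_neg_of_periodic (hw : Periodic w ν) (hν : 0 < ν) (hp : 1 < p) :
    Summable fun n : ℕ => w n * (n : ℝ) ^ (-p) := by
  have hbound :
      ∀ n, ‖w n * (n : ℝ) ^ (-p)‖ ≤ (∑ l ∈ range ν, |w l|) * (n : ℝ) ^ (-p) := by
    intro n
    rw [norm_mul, Real.norm_eq_abs, Real.norm_of_nonneg (by positivity), ← hw.map_mod_nat n]
    gcongr
    exact single_le_sum (f := fun l => |w l|) (fun _ _ => abs_nonneg _)
      (mem_range.mpr (Nat.mod_lt n hν))
  exact Summable.of_norm_bounded ((summable_nat_rpow.mpr (by linarith)).mul_left _) hbound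

theorem tsum_mul_rpow_neg_eq_sum_range (hw : Periodic w ν) (hν : 0 < ν) (hp : 1 < p) :
    ∑' n : ℕ, w n * (n : ℝ) ^ (-p) =
      ∑ l ∈ range ν, w l * ∑' q : ℕ, ((l + ν * q : ℕ) : ℝ) ^ (-p) := by
  have : NeZero ν := ⟨hν.ne'⟩
  rw [Nat.sumByResidueClasses (summable_mul_rpow_neg_of_periodic hw hν hp) ν]
  obtain ⟨m, rfl⟩ : ∃ m, ν = m + 1 := Nat.exists_eq_add_one.mpr hν
  rw [← Fin.sum_univ_eq_sum_range]
  refine Fintype.sum_congr _ _ fun j => ?_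
  rw [← tsum_mul_left]
  refine tsum_congr fun q => ?_
  have hperiod : w (j.val + (m + 1) * q) = w j.val := by
    rw [← hw.map_mod_nat, Nat.add_mul_mod_self_left, Nat.mod_eq_of_lt (ZMod.val_lt j)]
  rw [hperiod]; rfl

theorem tsum_rpow_neg_add_mul_le {l : ℕ} (hl : 0 < l) (hν : 0 < ν) (hp : 1 < p) :
    ∑' q : ℕ, ((l + ν * q : ℕ) : ℝ) ^ (-p) ≤
      1 / (l : ℝ) ^ p + (∑' n : ℕ, ((n : ℝ) + 1) ^ (-p)) / (ν : ℝ) ^ p := by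
  have hζ : Summable fun n : ℕ => ((n : ℝ) + 1) ^ (-p) := by
    simpa using (summable_nat_add_iff 1).mpr (summable_nat_rpow.mpr (by linarith : -p < -1))
  have htail : ∀ q : ℕ,
      ((l + ν * (q + 1) : ℕ) : ℝ) ^ (-p) ≤ ((q : ℝ) + 1) ^ (-p) / (ν : ℝ) ^ p := by
    intro q
    rw [div_eq_mul_inv, ← rpow_neg (Nat.cast_nonneg ν),
      ← mul_rpow (by positivity) (Nat.cast_nonneg ν)]
    apply rpow_le_rpow_of_nonpos (by positivity) _ (by linarith)
    have hl' : (0 : ℝ) ≤ l := Nat.cast_nonneg l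
    push_cast
    linarith
  have htail_summable : Summable fun q : ℕ => ((l + ν * (q + 1) : ℕ) : ℝ) ^ (-p) :=
    (hζ.div_const _).of_nonneg_of_le (fun _ => by positivity) htail
  have hsum : Summable fun q : ℕ => ((l + ν * q : ℕ) : ℝ) ^ (-p) :=
    (summable_nat_add_iff 1).mp htail_summable
  rw [hsum.tsum_eq_zero_add]
  gcongr
  · simp [rpow_neg]
  · rw [← tsum_div_const]
    exact htail_summable.tsum_le_tsum htail (hζ.div_const _)

theorem tsum_mul_rpow_neg_le_of_periodic (hw : Periodic w ν) (hw_zero : w 0 = 0)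
    (hw_nonneg : ∀ l, 0 ≤ w l) (hν : 0 < ν) (hp : 1 < p) :
    ∑' n : ℕ, w n * (n : ℝ) ^ (-p) ≤
      ∑ l ∈ Ico 1 ν,
        w l * (1 / (l : ℝ) ^ p + (∑' n : ℕ, ((n : ℝ) + 1) ^ (-p)) / (ν : ℝ) ^ p) := by
  rw [tsum_mul_rpow_neg_eq_sum_range hw hν hp, range_eq_Ico, sum_eq_sum_Ico_succ_bot hν, hw_zero,
    zero_mul, zero_add]
  gcongr with l hl
  · exact hw_nonneg l
  · exact tsum_rpow_neg_add_mul_le (mem_Ico.mp hl).1 hν hp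

end PeriodicWeight

theorem stmt_18_general (μ ν : ℕ) (hν : 0 < ν) (γ : ℝ) (hγ : 0 < γ) :
    (Summable fun k : ℕ =>
        if ν ∣ (k + 1) then (0:ℝ)
        else 1 / (((k : ℝ) + 1) ^ (1 + γ) * |Real.sin (Real.pi * ((k : ℝ) + 1) * μ / ν)|)) ∧
      (∑' k : ℕ,
          if ν ∣ (k + 1) then (0:ℝ)
          else 1 / (((k : ℝ) + 1) ^ (1 + γ) * |Real.sin (Real.pi * ((k : ℝ) + 1) * μ / ν)|))
        ≤ ∑ l ∈ Finset.Ico 1 ν,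
            (1 / |Real.sin (Real.pi * (l : ℝ) * μ / ν)|) *
              (1 / (l : ℝ) ^ (1 + γ) + (∑' n : ℕ, ((n : ℝ) + 1) ^ (-(1 + γ))) / (ν : ℝ) ^ (1 + γ)) := by
  set w : ℕ → ℝ := fun l => if ν ∣ l then 0 else 1 / |sin (π * l * μ / ν)| with hw_def
  have hw : Periodic w ν := fun l => by
    simp only [hw_def, Nat.dvd_add_self_right, periodic_abs_sin_pi_mul_mul_div μ ν l]
  have hp : 1 < 1 + γ := by linarith
  have hterm : (fun k : ℕ => if ν ∣ (k + 1) then (0:ℝ)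
      else 1 / (((k : ℝ) + 1) ^ (1 + γ) * |sin (π * ((k : ℝ) + 1) * μ / ν)|)) =
      fun k => w (k + 1) * ((k + 1 : ℕ) : ℝ) ^ (-(1 + γ)) := by
    ext k
    by_cases hk : ν ∣ k + 1
    · simp [hw_def, hk]
    · simp only [hw_def, if_neg hk, Nat.cast_add_one,
        rpow_neg (by positivity : (0:ℝ) ≤ k + 1)]
      field_simp
  have hw_zero : w 0 = 0 := by simp [hw_def]
  have hsum := summable_mul_rpow_neg_of_periodic hw hν hp
  rw [hterm]
  refine ⟨(summable_nat_add_iff 1).mpr hsum, ?_⟩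
  calc ∑' k : ℕ, w (k + 1) * ((k + 1 : ℕ) : ℝ) ^ (-(1 + γ))
      = ∑' n : ℕ, w n * (n : ℝ) ^ (-(1 + γ)) := by
        rw [hsum.tsum_eq_zero_add, hw_zero, zero_mul, zero_add]
    _ ≤ _ := tsum_mul_rpow_neg_le_of_periodic hw hw_zero
          (fun l => by simp only [hw_def]; split_ifs <;> positivity) hν hp
    _ = _ := sum_congr rfl fun l hl => by
          simp [hw_def, Nat.not_dvd_of_pos_of_lt (mem_Ico.mp hl).1 (mem_Ico.mp hl).2]

theorem stmt_18 (μ ν : ℕ) (hμ : 0 < μ) (hν : 0 < ν) (hcop : Nat.Coprime μ ν) (γ : ℝ) (hγ : 0 < γ) :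
    (Summable fun k : ℕ =>
        if ν ∣ (k + 1) then (0:ℝ)
        else 1 / (((k : ℝ) + 1) ^ (1 + γ) * |Real.sin (Real.pi * ((k : ℝ) + 1) * μ / ν)|)) ∧
      (∑' k : ℕ,
          if ν ∣ (k + 1) then (0:ℝ)
          else 1 / (((k : ℝ) + 1) ^ (1 + γ) * |Real.sin (Real.pi * ((k : ℝ) + 1) * μ / ν)|))
        ≤ ∑ l ∈ Finset.Ico 1 ν,
            (1 / |Real.sin (Real.pi * (l : ℝ) * μ / ν)|) *
              (1 / (l : ℝ) ^ (1 + γ) + (∑' n : ℕ, ((n : ℝ) + 1) ^ (-(1 + γ))) / (ν : ℝ) ^ (1 + γ)) :=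
  stmt_18_general μ ν hν γ hγ
end
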